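/- Fix a real number λ ≠ 0. For every integer n ≥ 1, S_{1,λ}(n,1) = Σ_{k=1}^{n} (1)_{k,λ} S^{(1)}_{J,λ}(n,k). -/

import Mathlib

/-!
The degenerate exponential and logarithm satisfy `(1 + λt) e_λ'(t) = e_λ(t)` and
`(1 + t) log_λ'(1 + t) = 1 + λ log_λ(1 + t)`, so by the chain rule `F = e_λ(log_λ(1 + t))` solves
`(1 + t) F' = F` with `F(0) = 1`, i.e. `F = 1 + t`. Substituting `log_λ(1 + t)` for `t` gives
`e_λ(M(t)) = 1 + log_λ(1 + t)` with `M(t) = log_λ(log_λ(1 + t) + 1)`. The `t^n`-coefficient of the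
left side is `Σ_k (1)_{k,λ} S^{(1)}_{J,λ}(n,k) / n!` and that of the right side is `(λ)_n / (λ n!)`.
Finally `S_{1,λ}(n,1) = (λ)_n / λ`: evaluate `(x)_n = Σ_l S_{1,λ}(n,l) (x)_{l,λ}` at `x = 0` and
at `x = λ`, where `(λ)_{l,λ}` vanishes for `l ≥ 2`.
-/

open Finset

/-- The degenerate falling factorial `(x)_{n,λ} = x(x−λ)⋯(x−(n−1)λ)`;
for `lam = 1` it is the ordinary falling factorial `(x)_n`. -/
noncomputable def dff (lam : ℝ) (n : ℕ) (x : ℝ) : ℝ :=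
  ∏ i ∈ Finset.range n, (x - i * lam)

/-- The degenerate exponential `e_λ^x(t) = Σ_{n≥0} (x)_{n,λ} t^n/n!`. -/
noncomputable def degExp (lam x : ℝ) : PowerSeries ℝ :=
  PowerSeries.mk fun n => dff lam n x / n.factorial

/-- The degenerate logarithm `log_λ(1+t) = Σ_{n≥1} λ^{n−1}(1)_{n,1/λ} t^n/n!`. -/
noncomputable def degLog (lam : ℝ) : PowerSeries ℝ :=
  PowerSeries.mk fun n =>
    if n = 0 then 0 else lam ^ (n - 1) * dff (1 / lam) n 1 / n.factorial

/-- Composition `f(g(t))` of formal power series (valid definition of composition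
when `g` has zero constant term, as in all uses below). -/
noncomputable def pscomp (f g : PowerSeries ℝ) : PowerSeries ℝ :=
  PowerSeries.mk fun n =>
    ∑ k ∈ Finset.range (n + 1), (PowerSeries.coeff k f) * (PowerSeries.coeff n (g ^ k))

open scoped Nat
open PowerSeries

lemma dff_succ (lam x : ℝ) (n : ℕ) : dff lam (n + 1) x = dff lam n x * (x - n * lam) :=
  prod_range_succ _ _

lemma dff_at_zero (lam : ℝ) {l : ℕ} (hl : l ≠ 0) : dff lam l 0 = 0 :=
  prod_eq_zero (mem_range.2 (Nat.pos_of_ne_zero hl)) (by simp)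

lemma dff_at_self (lam : ℝ) {l : ℕ} (hl : 2 ≤ l) : dff lam l lam = 0 :=
  prod_eq_zero (mem_range.2 hl) (by simp)

lemma dff_one_eq_pow_mul_dff_inv {lam : ℝ} (hlam : lam ≠ 0) (n : ℕ) :
    dff 1 n lam = lam ^ n * dff (1 / lam) n 1 := by
  rw [dff, dff, ← card_range n, ← prod_const, card_range, ← prod_mul_distrib]
  exact prod_congr rfl fun i _ => by field_simp

lemma sum_mul_dff_at_zero (lam : ℝ) (c : ℕ → ℝ) (n : ℕ) :
    ∑ l ∈ range (n + 1), c l * dff lam l 0 = c 0 := by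
  rw [sum_range_succ', sum_eq_zero fun l _ => by rw [dff_at_zero lam l.succ_ne_zero, mul_zero]]
  simp [dff]

lemma sum_mul_dff_at_self (lam : ℝ) (c : ℕ → ℝ) {n : ℕ} (hn : 1 ≤ n) :
    ∑ l ∈ range (n + 1), c l * dff lam l lam = c 0 + c 1 * lam := by
  obtain ⟨m, rfl⟩ := Nat.exists_eq_add_of_le' hn
  rw [sum_range_succ', sum_range_succ',
    sum_eq_zero fun l _ => by rw [dff_at_self lam (by omega), mul_zero]]
  simp [dff]
  ring

lemma coeff_pow_eq_zero_of_lt {R : Type*} [CommSemiring R] {g : R⟦X⟧} (hg : constantCoeff g = 0)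
    {n k : ℕ} (h : n < k) : coeff n (g ^ k) = 0 :=
  coeff_of_lt_order _ <| (Nat.cast_lt.2 h).trans_le (le_order_pow_of_constantCoeff_eq_zero k hg)

lemma eq_C_mul_one_add_X_of_one_add_X_mul_derivative {K : Type*} [Field K] [CharZero K]
    {F : K⟦X⟧} (hF : (1 + X) * d⁄dX K F = F) : F = C (constantCoeff F) * (1 + X) := by
  have hu : constantCoeff (1 + X : K⟦X⟧) ≠ 0 := by simp
  have hinv := PowerSeries.inv_mul_cancel _ hu
  suffices h : F * (1 + X)⁻¹ = C (constantCoeff F) by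
    rw [← h, mul_assoc, hinv, mul_one]
  refine derivative.ext ?_ (by simp [constantCoeff_inv])
  calc d⁄dX K (F * (1 + X)⁻¹)
      = ((1 + X)⁻¹) ^ 2 * ((1 + X) * d⁄dX K F - F) := by
        rw [Derivation.leibniz, derivative_inv']
        simp only [map_add, derivative_one, derivative_X, zero_add, smul_eq_mul]
        linear_combination (-d⁄dX K F * (1 + X)⁻¹) * hinv
    _ = d⁄dX K (C (constantCoeff F)) := by rw [hF, sub_self, mul_zero, derivative_C]

lemma pscomp_eq_subst (f : ℝ⟦X⟧) {g : ℝ⟦X⟧} (hg : constantCoeff g = 0) :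
    pscomp f g = f.subst g := by
  ext n
  rw [coeff_subst' (HasSubst.of_constantCoeff_zero' hg), pscomp, coeff_mk,
    finsum_eq_sum_of_support_subset _ (s := range (n + 1))]
  · rfl
  · exact fun k hk => mem_range.2 <| Nat.lt_of_not_le fun h =>
      hk (by simp only [coeff_pow_eq_zero_of_lt hg h, smul_zero])

lemma constantCoeff_pscomp (f g : ℝ⟦X⟧) : constantCoeff (pscomp f g) = constantCoeff f := by
  rw [← coeff_zero_eq_constantCoeff_apply, ← coeff_zero_eq_constantCoeff_apply]
  simp [pscomp]

lemma constantCoeff_degLog (lam : ℝ) : constantCoeff (degLog lam) = 0 := by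
  simp [degLog, ← coeff_zero_eq_constantCoeff_apply]

lemma one_add_C_mul_X_mul_derivative_degExp (lam x : ℝ) :
    (1 + C lam * X) * d⁄dX ℝ (degExp lam x) = C x * degExp lam x := by
  ext n
  rw [add_mul, one_mul, map_add, mul_assoc, coeff_C_mul, coeff_C_mul]
  rcases n with _ | m
  · simp [coeff_derivative, degExp, dff]
  · rw [coeff_succ_X_mul, coeff_derivative, coeff_derivative]
    simp only [degExp, coeff_mk]
    rw [dff_succ lam x (m + 1), Nat.factorial_succ (m + 1)]
    have := Nat.factorial_ne_zero m
    push_cast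
    field_simp
    ring

lemma one_add_X_mul_derivative_degLog {lam : ℝ} (hlam : lam ≠ 0) :
    (1 + X) * d⁄dX ℝ (degLog lam) = C lam * degLog lam + 1 := by
  ext n
  rw [add_mul, one_mul, map_add, map_add, coeff_C_mul]
  rcases n with _ | m
  · simp [coeff_derivative, degLog, dff]
  · rw [coeff_succ_X_mul, coeff_derivative, coeff_derivative]
    simp only [degLog, coeff_mk, coeff_one, if_neg (Nat.succ_ne_zero _), add_zero,
      Nat.add_sub_cancel]
    rw [dff_succ (1 / lam) 1 (m + 1), Nat.factorial_succ (m + 1)]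
    have := Nat.factorial_ne_zero m
    push_cast
    field_simp
    ring

lemma degExp_subst_degLog {lam : ℝ} (hlam : lam ≠ 0) :
    (degExp lam 1).subst (degLog lam) = 1 + X := by
  have hL0 := constantCoeff_degLog lam
  have hL : HasSubst (degLog lam) := HasSubst.of_constantCoeff_zero' hL0
  have hE := congrArg (subst (degLog lam)) (one_add_C_mul_X_mul_derivative_degExp lam 1)
  rw [map_one, one_mul, subst_mul hL, subst_add hL, subst_mul hL, subst_X hL,
    ← map_one (C (R := ℝ)), subst_C, subst_C, ← C_apply, ← C_apply, map_one] at hE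
  have hc : constantCoeff ((degExp lam 1).subst (degLog lam)) = 1 := by
    rw [← pscomp_eq_subst _ hL0, constantCoeff_pscomp, ← coeff_zero_eq_constantCoeff_apply]
    simp [degExp, dff]
  rw [eq_C_mul_one_add_X_of_one_add_X_mul_derivative (F := (degExp lam 1).subst (degLog lam)),
    hc, map_one, one_mul]
  rw [derivative_subst hL, mul_left_comm, one_add_X_mul_derivative_degLog hlam, ← hE]
  ring

lemma degExp_pscomp_degLog_pscomp_degLog {lam : ℝ} (hlam : lam ≠ 0) :
    pscomp (degExp lam 1) (pscomp (degLog lam) (degLog lam)) = 1 + degLog lam := by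
  have hL0 := constantCoeff_degLog lam
  have hL : HasSubst (degLog lam) := HasSubst.of_constantCoeff_zero' hL0
  rw [pscomp_eq_subst _ (by rwa [constantCoeff_pscomp]), pscomp_eq_subst _ hL0,
    ← subst_comp_subst_apply hL hL, degExp_subst_degLog hlam, subst_add hL, subst_X hL,
    ← map_one (C (R := ℝ)), subst_C, ← C_apply]

lemma coeff_degLog {lam : ℝ} (hlam : lam ≠ 0) {n : ℕ} (hn : n ≠ 0) :
    coeff n (degLog lam) = dff 1 n lam / lam / n ! := by
  obtain ⟨m, rfl⟩ := Nat.exists_eq_succ_of_ne_zero hn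
  rw [degLog, coeff_mk, if_neg hn, dff_one_eq_pow_mul_dff_inv hlam, Nat.succ_sub_one, pow_succ]
  field_simp

lemma coeff_one_eq_div_of_eq_sum_mul_dff {lam : ℝ} (hlam : lam ≠ 0) {p : ℝ → ℝ} (hp : p 0 = 0)
    {c : ℕ → ℝ} {n : ℕ} (hn : 1 ≤ n) (h : ∀ x, p x = ∑ l ∈ range (n + 1), c l * dff lam l x) :
    c 1 = p lam / lam := by
  have hc0 : c 0 = 0 := by rw [← sum_mul_dff_at_zero lam c n, ← h, hp]
  rw [h, sum_mul_dff_at_self lam c hn, hc0, zero_add, mul_div_cancel_right₀ _ hlam]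

theorem stirling1_at_one_via_jindalrae1 (lam : ℝ) (hlam : lam ≠ 0)
    (S1 SJ1 : ℕ → ℕ → ℝ)
    (hS1 : ∀ (n : ℕ) (x : ℝ), dff 1 n x = ∑ l ∈ Finset.range (n + 1), S1 n l * dff lam l x)
    (hSJ1 : ∀ k : ℕ, (PowerSeries.C ((k.factorial : ℝ))⁻¹) * (pscomp (degLog lam) (degLog lam)) ^ k = PowerSeries.mk (fun n => if k ≤ n then SJ1 n k / n.factorial else 0))
    : ∀ n : ℕ, 1 ≤ n → S1 n 1 = ∑ k ∈ Finset.Icc 1 n, dff lam k 1 * SJ1 n k := by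
  intro n hn
  have hn0 : n ≠ 0 := Nat.one_le_iff_ne_zero.1 hn
  set M := pscomp (degLog lam) (degLog lam)
  have hSJ : ∀ k ≤ n, SJ1 n k = n ! / k ! * coeff n (M ^ k) := fun k hk => by
    have h := congrArg (coeff n) (hSJ1 k)
    rw [coeff_C_mul, coeff_mk, if_pos hk] at h
    field_simp at h ⊢
    linarith
  have hcomp := congrArg (coeff n) (degExp_pscomp_degLog_pscomp_degLog hlam)
  rw [map_add, coeff_one, if_neg hn0, zero_add, pscomp, coeff_mk] at hcomp
  calc S1 n 1 = dff 1 n lam / lam :=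
        coeff_one_eq_div_of_eq_sum_mul_dff hlam (dff_at_zero 1 hn0) hn (hS1 n)
    _ = n ! * ∑ k ∈ range (n + 1), coeff k (degExp lam 1) * coeff n (M ^ k) := by
        rw [hcomp, coeff_degLog hlam hn0]
        field_simp
    _ = ∑ k ∈ range (n + 1), dff lam k 1 * SJ1 n k := by
        rw [mul_sum]
        refine sum_congr rfl fun k hk => ?_
        rw [hSJ k (Nat.lt_succ_iff.1 (mem_range.1 hk)), degExp, coeff_mk]
        field_simp
    _ = ∑ k ∈ Icc 1 n, dff lam k 1 * SJ1 n k := by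
        rw [range_eq_Ico, sum_eq_sum_Ico_succ_bot (Nat.succ_pos n), hSJ 0 (Nat.zero_le n),
          pow_zero, coeff_one, if_neg hn0, mul_zero, mul_zero, zero_add,
          Nat.succ_eq_add_one, zero_add, Ico_add_one_right_eq_Icc]
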